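/- arXiv:2505.08697 — 5 statements merged into one kernel-verified Lean document; each statement's English description precedes it below -/
import Mathlib

section
/- Every realizability predicate φ on an assembly X is equivalent (with respect to instance reducibility, in both directions) to the realizability predicate α_φ on the partitioned assembly X_φ, where |X_φ| := {(x,s) : x ∈ |X|, s ⊩_X x}, the realizer of (x,s) is s, and α_φ(x,s) := {⟨q,s⟩ : q ∈ φ(x)}. -/
/-- A partial combinatory algebra: a set with a partial binary application
and combinators `k`, `s` satisfying the usual axioms. -/
structure PCA where
  A : Type
  app : A → A → Part A
  k : A
  s : A
  k_spec : ∀ a b : A, (app k a).bind (fun x => app x b) = Part.some a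
  s_total : ∀ a b : A, ((app s a).bind (fun x => app x b)).Dom
  s_spec : ∀ a b c : A,
    (((app s a).bind (fun x => app x b)).bind (fun x => app x c)) =
      (app a c).bind (fun x => (app b c).bind (fun y => app x y))

namespace PCA

/-- Application extended to partial elements (Kleene application). -/
def papp (P : PCA) (x y : Part P.A) : Part P.A :=
  x.bind fun a => y.bind fun b => P.app a b

end PCA
/-- An elementary sub-PCA: a subset containing suitable combinators `k`, `s`
(working for the whole PCA) and closed under application. -/
structure SubPCA (P : PCA) where
  mem : P.A → Prop
  k' : P.A
  s' : P.A
  k'_mem : mem k'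
  s'_mem : mem s'
  k'_spec : ∀ a b : P.A, P.papp (P.app k' a) (Part.some b) = Part.some a
  s'_total : ∀ a b : P.A, (P.papp (P.app s' a) (Part.some b)).Dom
  s'_spec : ∀ a b c : P.A,
    P.papp (P.papp (P.app s' a) (Part.some b)) (Part.some c) =
      P.papp (P.app a c) (P.app b c)
  closed : ∀ a b c : P.A, mem a → mem b → P.app a b = Part.some c → mem c
/-- Pairing and projection combinators, lying in the sub-PCA, together with the
induced total coding function `code a b = ⟨a,b⟩`. -/
structure Pairing (P : PCA) (S : SubPCA P) where
  pair : P.A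
  p1 : P.A
  p2 : P.A
  pair_mem : S.mem pair
  p1_mem : S.mem p1
  p2_mem : S.mem p2
  code : P.A → P.A → P.A
  code_spec : ∀ a b : P.A, P.papp (P.app pair a) (Part.some b) = Part.some (code a b)
  p1_spec : ∀ a b : P.A, P.app p1 (code a b) = Part.some a
  p2_spec : ∀ a b : P.A, P.app p2 (code a b) = Part.some b

/-- An assembly: a set with a total realizability relation `⊩ ⊆ A × X`. -/
structure Assembly (P : PCA) where
  X : Type
  Rel : P.A → X → Prop
  total : ∀ x : X, ∃ r : P.A, Rel r x

/-- Instance reducibility between realizability predicates on assemblies: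
`φ` on `Xa` is instance reducible to `ψ` on `Ya` iff there are `ℓ₁, ℓ₂ ∈ A'`
such that for every `s ⊩ x` there is `y` with `ℓ₁·s ⊩ y` and for every
`p ∈ ψ(y)`, `ℓ₂·⟨s,p⟩ ∈ φ(x)`. -/
def asmInstRed (P : PCA) (S : SubPCA P) (Q : Pairing P S)
    (Xa : Assembly P) (φ : Xa.X → Set P.A)
    (Ya : Assembly P) (ψ : Ya.X → Set P.A) : Prop :=
  ∃ l1 l2 : P.A, S.mem l1 ∧ S.mem l2 ∧
    ∀ x : Xa.X, ∀ s : P.A, Xa.Rel s x →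
      ∃ y : Ya.X, ∃ r : P.A, P.app l1 s = Part.some r ∧ Ya.Rel r y ∧
        ∀ p ∈ ψ y, ∃ c ∈ φ x, P.app l2 (Q.code s p) = Part.some c

/-- The partitioned assembly `X_φ` with underlying set `{(x,s) : s ⊩ x}`, where
`(x,s)` is realized exactly by `s`. -/
def partAsmOf (P : PCA) (Xa : Assembly P) : Assembly P where
  X := {z : Xa.X × P.A // Xa.Rel z.2 z.1}
  Rel := fun r z => r = z.val.2
  total := fun z => ⟨z.val.2, rfl⟩

/-- The predicate `α_φ (x,s) := {⟨q,s⟩ : q ∈ φ(x)}` on `X_φ`. -/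
def predOf (P : PCA) (S : SubPCA P) (Q : Pairing P S) (Xa : Assembly P)
    (φ : Xa.X → Set P.A) : (partAsmOf P Xa).X → Set P.A :=
  fun z => {c | ∃ q ∈ φ z.val.1, c = Q.code q z.val.2}

section Helpers

variable {P : PCA} {S : SubPCA P}

lemma papp_some_some (a b : P.A) : P.papp (Part.some a) (Part.some b) = P.app a b := by
  simp [PCA.papp]

lemma papp_some_eq {x : Part P.A} {b r : P.A} (h : P.papp x (Part.some b) = Part.some r) :
    ∃ a, x = Part.some a ∧ P.app a b = Part.some r := by
  have hr : r ∈ P.papp x (Part.some b) := h ▸ Part.mem_some r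
  rcases Part.mem_bind_iff.mp hr with ⟨a, ha, hr2⟩
  rcases Part.mem_bind_iff.mp hr2 with ⟨b', hb', hr3⟩
  rcases Part.mem_some_iff.mp hb' with rfl
  exact ⟨a, Part.eq_some_iff.mpr ha, Part.eq_some_iff.mpr hr3⟩

lemma k_app (S : SubPCA P) (a : P.A) :
    ∃ ka, P.app S.k' a = Part.some ka ∧ (∀ b, P.app ka b = Part.some a) ∧
      (S.mem a → S.mem ka) := by
  rcases papp_some_eq (S.k'_spec a a) with ⟨ka, hka, _⟩
  refine ⟨ka, hka, fun b => ?_, fun hmem => S.closed _ _ _ S.k'_mem hmem hka⟩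
  have := S.k'_spec a b
  rw [hka, papp_some_some] at this
  exact this

lemma s_app (S : SubPCA P) (a b : P.A) :
    ∃ sab, P.papp (P.app S.s' a) (Part.some b) = Part.some sab ∧
      (∀ c, P.app sab c = P.papp (P.app a c) (P.app b c)) ∧
      (S.mem a → S.mem b → S.mem sab) := by
  have hdom := S.s'_total a b
  set x := P.papp (P.app S.s' a) (Part.some b) with hx
  have hsab : x = Part.some (x.get hdom) := Part.get_eq_iff_eq_some.mp rfl |>.symm ▸ (Part.eq_some_iff.mpr (Part.get_mem hdom))
  refine ⟨x.get hdom, hsab, fun c => ?_, fun ha hb => ?_⟩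
  · have := S.s'_spec a b c
    rw [← hx, hsab, papp_some_some] at this
    exact this
  · rcases papp_some_eq hsab with ⟨u, hu, hu2⟩
    exact S.closed _ _ _ (S.closed _ _ _ S.s'_mem ha hu) hb hu2

lemma id_elem (S : SubPCA P) :
    ∃ i, S.mem i ∧ ∀ c, P.app i c = Part.some c := by
  rcases s_app S S.k' S.k' with ⟨i, _, hi, hmem⟩
  refine ⟨i, hmem S.k'_mem S.k'_mem, fun c => ?_⟩
  rcases k_app S c with ⟨kc, hkc, hkcapp, _⟩
  rw [hi, hkc, papp_some_some, hkcapp]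

end Helpers

/-- Every realizability predicate `φ` on an assembly `X` is equivalent, with
respect to instance reducibility in both directions, to the predicate `α_φ`
on the partitioned assembly `X_φ`. -/
theorem pred_equiv_partitioned (P : PCA) (S : SubPCA P) (Q : Pairing P S)
    (Xa : Assembly P) (φ : Xa.X → Set P.A) :
    asmInstRed P S Q Xa φ (partAsmOf P Xa) (predOf P S Q Xa φ) ∧
    asmInstRed P S Q (partAsmOf P Xa) (predOf P S Q Xa φ) Xa φ := by

  rcases id_elem S with ⟨i, i_mem, i_spec⟩
  rcases k_app S Q.p1 with ⟨kp1, hkp1, hkp1app, hkp1mem⟩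
  rcases s_app S kp1 Q.p2 with ⟨t1, _, ht1, ht1mem⟩
  rcases k_app S Q.pair with ⟨kpair, hkpair, hkpairapp, hkpairmem⟩
  rcases s_app S kpair Q.p2 with ⟨v, _, hv, hvmem⟩
  rcases s_app S v Q.p1 with ⟨t2, _, ht2, ht2mem⟩
  constructor
  · refine ⟨i, t1, i_mem, ht1mem (hkp1mem Q.p1_mem) Q.p2_mem, ?_⟩
    intro x s hs
    refine ⟨⟨(x, s), hs⟩, s, i_spec s, rfl, ?_⟩
    rintro p ⟨q, hq, rfl⟩
    refine ⟨q, hq, ?_⟩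
    rw [ht1, hkp1app, Q.p2_spec, papp_some_some, Q.p1_spec]
  · refine ⟨i, t2, i_mem, ht2mem (hvmem (hkpairmem Q.pair_mem) Q.p2_mem) Q.p1_mem, ?_⟩
    rintro ⟨⟨x, s0⟩, hs0⟩ s hs
    subst hs
    refine ⟨x, s, i_spec s, hs0, fun q hq => ?_⟩
    refine ⟨Q.code q s, ⟨q, hq, rfl⟩, ?_⟩
    have hpq := Q.code_spec q s
    rcases papp_some_eq hpq with ⟨pq, hpq1, hpq2⟩
    rw [ht2, hv, hkpairapp, Q.p2_spec, Q.p1_spec, papp_some_some, hpq1, papp_some_some, hpq2]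
end

section
/- The full existential completion P^∃ of a primary doctrine P on a finitely complete category C is an existential doctrine: for every arrow f : A → B of C, the reindexing P^∃_f (defined by pullback) has a left adjoint ∃_f given by post-composition, i.e., ∃_f(g : C → A, α) := (f∘g : C → B, α), and these left adjoints satisfy the Beck-Chevalley condition and Frobenius reciprocity. -/
open CategoryTheory

universe w v u v₂ u₂

/-- A primary doctrine: a contravariant functor from a category `C` (with
finite limits) to inf-semilattices, presented concretely. -/
structure PrimaryDoctrine (C : Type u) [Category.{v} C] where
  obj : C → Type w
  le : {X : C} → obj X → obj X → Prop
  le_refl : ∀ {X : C} (a : obj X), le a a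
  le_trans : ∀ {X : C} {a b c : obj X}, le a b → le b c → le a c
  le_antisymm : ∀ {X : C} {a b : obj X}, le a b → le b a → a = b
  inf : {X : C} → obj X → obj X → obj X
  top : {X : C} → obj X
  inf_le_left : ∀ {X : C} (a b : obj X), le (inf a b) a
  inf_le_right : ∀ {X : C} (a b : obj X), le (inf a b) b
  le_inf : ∀ {X : C} {a b c : obj X}, le a b → le a c → le a (inf b c)
  le_top : ∀ {X : C} (a : obj X), le a top
  map : {X Y : C} → (X ⟶ Y) → obj Y → obj X
  map_id : ∀ {X : C} (a : obj X), map (𝟙 X) a = a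
  map_comp : ∀ {X Y Z : C} (f : X ⟶ Y) (g : Y ⟶ Z) (a : obj Z),
    map (f ≫ g) a = map f (map g a)
  map_mono : ∀ {X Y : C} (f : X ⟶ Y) {a b : obj Y}, le a b → le (map f a) (map f b)
  map_inf : ∀ {X Y : C} (f : X ⟶ Y) (a b : obj Y),
    map f (inf a b) = inf (map f a) (map f b)
  map_top : ∀ {X Y : C} (f : X ⟶ Y), map f (top) = top

variable {C : Type u} [Category.{v} C]

/-- Objects of the fibre of the full existential completion `P^∃` over `A`:
pairs of an arrow `f : B ⟶ A` and an element `α ∈ P(B)`. -/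
def ExObj (D : PrimaryDoctrine.{w} C) (A : C) : Type max u v w :=
  Σ B : C, (B ⟶ A) × D.obj B

/-- The order on the fibre `P^∃(A)`: `(f,α) ≤ (g,β)` iff there is `h` with
`g ∘ h = f` and `α ≤ P_h(β)`. -/
def exLe (D : PrimaryDoctrine.{w} C) {A : C} (u v : ExObj D A) : Prop :=
  ∃ h : u.1 ⟶ v.1, h ≫ v.2.1 = u.2.1 ∧ D.le u.2.2 (D.map h v.2.2)

variable [Limits.HasFiniteLimits C]

/-- Reindexing in the full existential completion, defined by pullback. -/
noncomputable def exMap (D : PrimaryDoctrine.{w} C) {A B : C} (f : A ⟶ B)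
    (v : ExObj D B) : ExObj D A :=
  ⟨Limits.pullback f v.2.1,
    ⟨Limits.pullback.fst f v.2.1, D.map (Limits.pullback.snd f v.2.1) v.2.2⟩⟩

/-- The candidate left adjoint `∃_f` in the full existential completion, given
by post-composition. -/
def exEx (D : PrimaryDoctrine.{w} C) {A B : C} (f : A ⟶ B)
    (u : ExObj D A) : ExObj D B :=
  ⟨u.1, ⟨u.2.1 ≫ f, u.2.2⟩⟩

/-- The candidate binary meet in the fibre `P^∃(A)`, computed by pullback. -/
noncomputable def exInf (D : PrimaryDoctrine.{w} C) {A : C}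
    (u v : ExObj D A) : ExObj D A :=
  ⟨Limits.pullback u.2.1 v.2.1,
    ⟨Limits.pullback.fst u.2.1 v.2.1 ≫ u.2.1,
      D.inf (D.map (Limits.pullback.fst u.2.1 v.2.1) u.2.2)
        (D.map (Limits.pullback.snd u.2.1 v.2.1) v.2.2)⟩⟩

/-- The full existential completion is an existential doctrine:
`∃_f` (post-composition) is left adjoint to reindexing `P^∃_f` (pullback), and
these left adjoints satisfy the Beck–Chevalley condition (for every pullback
square) and Frobenius reciprocity (up to the fibre preorder). -/
theorem ex_completion_existential (D : PrimaryDoctrine.{w} C) :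
    (∀ {A B : C} (f : A ⟶ B) (u : ExObj D A) (v : ExObj D B),
        exLe D (exEx D f u) v ↔ exLe D u (exMap D f v)) ∧
    (∀ {A B B' Q : C} (f : A ⟶ B) (g : B' ⟶ B) (g' : Q ⟶ A) (f' : Q ⟶ B'),
        IsPullback g' f' f g → ∀ u : ExObj D A,
          exLe D (exEx D f' (exMap D g' u)) (exMap D g (exEx D f u)) ∧
          exLe D (exMap D g (exEx D f u)) (exEx D f' (exMap D g' u))) ∧
    (∀ {A B : C} (f : A ⟶ B) (α : ExObj D B) (β : ExObj D A),
        exLe D (exEx D f (exInf D (exMap D f α) β)) (exInf D α (exEx D f β)) ∧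
        exLe D (exInf D α (exEx D f β)) (exEx D f (exInf D (exMap D f α) β))) := by
  refine ⟨?_, ?_, ?_⟩
  · -- adjunction
    rintro A B f ⟨U, a, α⟩ ⟨V, b, β⟩
    dsimp only [exEx, exMap, exLe]
    constructor
    · rintro ⟨h, hc, hle⟩
      refine ⟨Limits.pullback.lift a h hc.symm, Limits.pullback.lift_fst _ _ _, ?_⟩
      rw [← D.map_comp, Limits.pullback.lift_snd]
      exact hle
    · rintro ⟨k, hc, hle⟩
      refine ⟨k ≫ Limits.pullback.snd f b, ?_, ?_⟩
      · rw [Category.assoc, ← Limits.pullback.condition, ← Category.assoc, hc]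
      · rw [D.map_comp]; exact hle
  · -- Beck–Chevalley
    rintro A B B' Q f g g' f' hp ⟨U, a, α⟩
    constructor
    · dsimp only [exEx, exMap, exLe]
      refine ⟨Limits.pullback.lift
          (Limits.pullback.fst g' a ≫ f') (Limits.pullback.snd g' a) ?_, ?_, ?_⟩
      · rw [Category.assoc, ← hp.w, ← Category.assoc, Limits.pullback.condition,
          Category.assoc]
      · exact Limits.pullback.lift_fst _ _ _
      · rw [← D.map_comp, Limits.pullback.lift_snd]
        exact D.le_refl _
    · dsimp only [exEx, exMap, exLe]
      refine ⟨Limits.pullback.lift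
          (hp.lift (Limits.pullback.snd g (a ≫ f) ≫ a) (Limits.pullback.fst g (a ≫ f))
            (by rw [Category.assoc, ← Limits.pullback.condition]))
          (Limits.pullback.snd g (a ≫ f)) (by rw [hp.lift_fst]), ?_, ?_⟩
      · rw [← Category.assoc]
        rw [show Limits.pullback.lift
            (hp.lift (Limits.pullback.snd g (a ≫ f) ≫ a) (Limits.pullback.fst g (a ≫ f))
              (by rw [Category.assoc, ← Limits.pullback.condition]))
            (Limits.pullback.snd g (a ≫ f)) (by rw [hp.lift_fst])
            ≫ Limits.pullback.fst g' a = hp.lift _ _ _ from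
          Limits.pullback.lift_fst _ _ _, hp.lift_snd]
      · rw [← D.map_comp, Limits.pullback.lift_snd]
        exact D.le_refl _
  · -- Frobenius
    rintro A B f ⟨X, x, a⟩ ⟨Y, y, b⟩
    have h1 : Limits.pullback.fst f x ≫ f = Limits.pullback.snd f x ≫ x :=
      Limits.pullback.condition
    have h2 : Limits.pullback.fst (Limits.pullback.fst f x) y ≫ Limits.pullback.fst f x
        = Limits.pullback.snd (Limits.pullback.fst f x) y ≫ y :=
      Limits.pullback.condition
    have h3 : Limits.pullback.fst x (y ≫ f) ≫ x
        = Limits.pullback.snd x (y ≫ f) ≫ (y ≫ f) :=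
      Limits.pullback.condition
    constructor
    · dsimp only [exEx, exMap, exInf, exLe]
      refine ⟨Limits.pullback.lift
          (Limits.pullback.fst (Limits.pullback.fst f x) y ≫ Limits.pullback.snd f x)
          (Limits.pullback.snd (Limits.pullback.fst f x) y)
          (by rw [Category.assoc, ← h1, ← Category.assoc, h2, Category.assoc]), ?_, ?_⟩
      · rw [← Category.assoc, Limits.pullback.lift_fst, Category.assoc, ← h1,
          ← Category.assoc, h2, Category.assoc]
      · simp only [D.map_inf, ← D.map_comp, Category.assoc,
          Limits.pullback.lift_fst, Limits.pullback.lift_snd,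
          Limits.pullback.lift_fst_assoc, Limits.pullback.lift_snd_assoc]
        exact D.le_refl _
    · dsimp only [exEx, exMap, exInf, exLe]
      refine ⟨Limits.pullback.lift
          (Limits.pullback.lift (Limits.pullback.snd x (y ≫ f) ≫ y)
            (Limits.pullback.fst x (y ≫ f)) (by rw [Category.assoc, ← h3]))
          (Limits.pullback.snd x (y ≫ f)) (by rw [Limits.pullback.lift_fst]), ?_, ?_⟩
      · simp only [Category.assoc, Limits.pullback.lift_fst,
          Limits.pullback.lift_snd, Limits.pullback.lift_fst_assoc,
          Limits.pullback.lift_snd_assoc, h3]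
      · simp only [D.map_inf, ← D.map_comp, Category.assoc,
          Limits.pullback.lift_fst, Limits.pullback.lift_snd,
          Limits.pullback.lift_fst_assoc, Limits.pullback.lift_snd_assoc]
        exact D.le_refl _
end

section
/- In the fibre iR(X,φ) of the instance reducibility doctrine, binary joins exist: given (f : (Y,ψ) → (X,φ), α) and (g : (Z,η) → (X,φ), β), the pair ([f,g], [α,β]) on the coproduct partitioned assembly Y + Z, with realizers χ(0,y) = ⟨k, ψ(y)⟩ and χ(1,z) = ⟨k̄, η(z)⟩, is the least upper bound of (f,α) and (g,β). -/
/-- An element of the fibre `iR(X,φ)` of the instance reducibility doctrine: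
a partitioned assembly `(Y,ψ)`, an `A'`-realized map `f : (Y,ψ) → (X,φ)` of
partitioned assemblies, and a predicate `α : Y → 𝒫(A)`. -/
structure IRObj (P : PCA) (S : SubPCA P) (X : Type) (φ : X → P.A) where
  Y : Type
  ψ : Y → P.A
  f : Y → X
  hf : ∃ r : P.A, S.mem r ∧ ∀ y : Y, P.app r (ψ y) = Part.some (φ (f y))
  α : Y → Set P.A

/-- The order on the fibre `iR(X,φ)`: `(f,α) ≤ (g,β)` iff there is a morphism
`h` of partitioned assemblies with `g ∘ h = f` and some `ℓ ∈ A'` with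
`ℓ·⟨ψ(y),q⟩ ∈ α(y)` for all `y` and all `q ∈ β(h(y))`. -/
def IRle (P : PCA) (S : SubPCA P) (Q : Pairing P S) {X : Type} {φ : X → P.A}
    (u v : IRObj P S X φ) : Prop :=
  ∃ h : u.Y → v.Y,
    (∃ r : P.A, S.mem r ∧ ∀ y : u.Y, P.app r (u.ψ y) = Part.some (v.ψ (h y))) ∧
    (∀ y : u.Y, v.f (h y) = u.f y) ∧
    ∃ l : P.A, S.mem l ∧
      ∀ y : u.Y, ∀ q ∈ v.α (h y), ∃ c ∈ u.α y, P.app l (Q.code (u.ψ y) q) = Part.some c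

/-- The realizer map of the coproduct partitioned assembly `Y + Z`:
`χ(0,y) = ⟨kt, ψ(y)⟩` and `χ(1,z) = ⟨kf, η(z)⟩`. -/
def joinPsi (P : PCA) (S : SubPCA P) (Q : Pairing P S) {X : Type} {φ : X → P.A}
    (kt kf : P.A) (u v : IRObj P S X φ) : u.Y ⊕ v.Y → P.A :=
  Sum.elim (fun y => Q.code kt (u.ψ y)) (fun z => Q.code kf (v.ψ z))

/-- The candidate join `([f,g], [α,β])` on the coproduct partitioned assembly. -/
def irJoin (P : PCA) (S : SubPCA P) (Q : Pairing P S) {X : Type} {φ : X → P.A}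
    (kt kf : P.A) (u v : IRObj P S X φ)
    (hfJ : ∃ r : P.A, S.mem r ∧ ∀ w : u.Y ⊕ v.Y,
      P.app r (joinPsi P S Q kt kf u v w) = Part.some (φ (Sum.elim u.f v.f w))) :
    IRObj P S X φ where
  Y := u.Y ⊕ v.Y
  ψ := joinPsi P S Q kt kf u v
  f := Sum.elim u.f v.f
  hf := hfJ
  α := Sum.elim u.α v.α


namespace IRAux

variable (P : PCA) (S : SubPCA P)

theorem papp_some_some (a b : P.A) : P.papp (Part.some a) (Part.some b) = P.app a b := by
  simp [PCA.papp, Part.bind_some]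

theorem papp_some_right (x : Part P.A) (b : P.A) :
    P.papp x (Part.some b) = x.bind (fun a => P.app a b) := by
  simp [PCA.papp, Part.bind_some]

theorem papp_some_left (a : P.A) (y : Part P.A) :
    P.papp (Part.some a) y = y.bind (fun b => P.app a b) := by
  simp [PCA.papp, Part.bind_some]

theorem k1_dom (a : P.A) : (P.app S.k' a).Dom := by
  have h := S.k'_spec a a
  rw [Part.eq_some_iff] at h
  rcases Part.mem_bind_iff.mp h with ⟨b, hb, _⟩
  exact Part.dom_iff_mem.mpr ⟨b, hb⟩

def K1 (a : P.A) : P.A := (P.app S.k' a).get (k1_dom P S a)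

theorem app_k'_eq (a : P.A) : P.app S.k' a = Part.some (K1 P S a) :=
  (Part.some_get _).symm

theorem app_K1 (a b : P.A) : P.app (K1 P S a) b = Part.some a := by
  have h := S.k'_spec a b
  rwa [app_k'_eq, papp_some_some] at h

theorem K1_mem {a : P.A} (ha : S.mem a) : S.mem (K1 P S a) :=
  S.closed _ _ _ S.k'_mem ha (app_k'_eq P S a)

theorem s1_dom (a : P.A) : (P.app S.s' a).Dom := by
  have h := S.s'_total a a
  rcases Part.dom_iff_mem.mp h with ⟨y, hy⟩
  rcases Part.mem_bind_iff.mp hy with ⟨b, hb, _⟩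
  exact Part.dom_iff_mem.mpr ⟨b, hb⟩

def S1 (a : P.A) : P.A := (P.app S.s' a).get (s1_dom P S a)

theorem app_s'_eq (a : P.A) : P.app S.s' a = Part.some (S1 P S a) :=
  (Part.some_get _).symm

theorem s2_dom (a b : P.A) : (P.app (S1 P S a) b).Dom := by
  have h := S.s'_total a b
  rwa [PCA.papp, app_s'_eq, Part.bind_some, Part.bind_some] at h

def S2 (a b : P.A) : P.A := (P.app (S1 P S a) b).get (s2_dom P S a b)

theorem app_S1_eq (a b : P.A) : P.app (S1 P S a) b = Part.some (S2 P S a b) :=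
  (Part.some_get _).symm

theorem S1_mem {a : P.A} (ha : S.mem a) : S.mem (S1 P S a) :=
  S.closed _ _ _ S.s'_mem ha (app_s'_eq P S a)

theorem S2_mem {a b : P.A} (ha : S.mem a) (hb : S.mem b) : S.mem (S2 P S a b) :=
  S.closed _ _ _ (S1_mem P S ha) hb (app_S1_eq P S a b)

theorem app_S2 (a b c : P.A) :
    P.app (S2 P S a b) c = P.papp (P.app a c) (P.app b c) := by
  have h := S.s'_spec a b c
  rwa [app_s'_eq, papp_some_some, app_S1_eq, papp_some_some] at h

/-- Terms over the PCA with one variable. -/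
inductive Tm (P : PCA) where
  | var : Tm P
  | const : P.A → Tm P
  | app : Tm P → Tm P → Tm P

def Tm.eval {P : PCA} : Tm P → P.A → Part P.A
  | .var, a => Part.some a
  | .const c, _ => Part.some c
  | .app t u, a => P.papp (t.eval a) (u.eval a)

def Tm.memS {P : PCA} (S : SubPCA P) : Tm P → Prop
  | .var => True
  | .const c => S.mem c
  | .app t u => t.memS S ∧ u.memS S

def Tm.abs {P : PCA} (S : SubPCA P) : Tm P → P.A
  | .var => S2 P S S.k' S.k'
  | .const c => K1 P S c
  | .app t u => S2 P S (t.abs S) (u.abs S)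

theorem abs_mem : ∀ {t : Tm P}, t.memS S → S.mem (t.abs S)
  | .var, _ => S2_mem P S S.k'_mem S.k'_mem
  | .const _, h => K1_mem P S h
  | .app _ _, h => S2_mem P S (abs_mem h.1) (abs_mem h.2)

theorem app_abs : ∀ (t : Tm P) (a : P.A), P.app (t.abs S) a = t.eval a
  | .var, a => by
    rw [Tm.abs, app_S2, app_k'_eq, papp_some_some, app_K1]; rfl
  | .const c, a => by
    rw [Tm.abs, app_K1]; rfl
  | .app t u, a => by
    rw [Tm.abs, app_S2, app_abs t a, app_abs u a]; rfl

end IRAux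

namespace IRAux

variable (P : PCA) (S : SubPCA P) (Q : Pairing P S)

theorem code_bind (a b : P.A) :
    (P.app Q.pair a).bind (fun c => P.app c b) = Part.some (Q.code a b) := by
  rw [← papp_some_right]; exact Q.code_spec a b

/-- `λw. t (p1 w) a b (p2 w)` -/
def caseTm (t a b : P.A) : Tm P :=
  .app (.app (.app (.app (.const t) (.app (.const Q.p1) .var)) (.const a))
    (.const b)) (.app (.const Q.p2) .var)

theorem caseTm_memS {t a b : P.A} (ht : S.mem t) (ha : S.mem a) (hb : S.mem b) :
    (caseTm P S Q t a b).memS S := by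
  simp [caseTm, Tm.memS, ht, ha, hb, Q.p1_mem, Q.p2_mem]

theorem caseTm_eval_sel {t k a b x sel : P.A}
    (hsel : P.papp (P.papp (P.app t k) (Part.some a)) (Part.some b) = Part.some sel) :
    (caseTm P S Q t a b).eval (Q.code k x) = P.app sel x := by
  rw [papp_some_right, papp_some_right] at hsel
  simp only [caseTm, Tm.eval, papp_some_some, papp_some_left, papp_some_right,
    Part.bind_some, Q.p1_spec, Q.p2_spec, hsel]

/-- `λm. t (p1 (p1 m)) a b (pair (p2 (p1 m)) (p2 m))` -/
def lTm (t a b : P.A) : Tm P :=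
  .app (.app (.app (.app (.const t) (.app (.const Q.p1) (.app (.const Q.p1) .var)))
    (.const a)) (.const b))
    (.app (.app (.const Q.pair) (.app (.const Q.p2) (.app (.const Q.p1) .var)))
      (.app (.const Q.p2) .var))

theorem lTm_memS {t a b : P.A} (ht : S.mem t) (ha : S.mem a) (hb : S.mem b) :
    (lTm P S Q t a b).memS S := by
  simp [lTm, Tm.memS, ht, ha, hb, Q.p1_mem, Q.p2_mem, Q.pair_mem]

theorem lTm_eval_sel {t k a b x q sel : P.A}
    (hsel : P.papp (P.papp (P.app t k) (Part.some a)) (Part.some b) = Part.some sel) :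
    (lTm P S Q t a b).eval (Q.code (Q.code k x) q) = P.app sel (Q.code x q) := by
  rw [papp_some_right, papp_some_right] at hsel
  simp only [lTm, Tm.eval, papp_some_some, papp_some_left, papp_some_right,
    Part.bind_some, Q.p1_spec, Q.p2_spec, code_bind, hsel]

/-- `λa. pair k a` -/
def pairTm (k : P.A) : Tm P :=
  .app (.app (.const Q.pair) (.const k)) .var

theorem pairTm_memS {k : P.A} (hk : S.mem k) : (pairTm P S Q k).memS S := by
  simp [pairTm, Tm.memS, hk, Q.pair_mem]

theorem pairTm_eval (k x : P.A) :
    (pairTm P S Q k).eval x = Part.some (Q.code k x) := by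
  simp only [pairTm, Tm.eval, papp_some_some, papp_some_right, Part.bind_some, code_bind]

end IRAux
/-- In the fibre `iR(X,φ)`, binary joins exist: given Booleans `kt`, `kf` with
a case operator `t` in `A'`, the copairing on the coproduct partitioned
assembly is the least upper bound of `(f,α)` and `(g,β)`. -/
theorem irJoin_is_lub (P : PCA) (S : SubPCA P) (Q : Pairing P S)
    (kt kf t : P.A) (hkt : S.mem kt) (hkf : S.mem kf) (ht : S.mem t)
    (htt : ∀ a b : P.A,
      P.papp (P.papp (P.app t kt) (Part.some a)) (Part.some b) = Part.some a)
    (htf : ∀ a b : P.A,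
      P.papp (P.papp (P.app t kf) (Part.some a)) (Part.some b) = Part.some b)
    (X : Type) (φ : X → P.A) (u v : IRObj P S X φ) :
    ∃ hfJ : ∃ r : P.A, S.mem r ∧ ∀ w : u.Y ⊕ v.Y,
        P.app r (joinPsi P S Q kt kf u v w) = Part.some (φ (Sum.elim u.f v.f w)),
      IRle P S Q u (irJoin P S Q kt kf u v hfJ) ∧
      IRle P S Q v (irJoin P S Q kt kf u v hfJ) ∧
      ∀ w : IRObj P S X φ, IRle P S Q u w → IRle P S Q v w →
        IRle P S Q (irJoin P S Q kt kf u v hfJ) w := by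
  classical
  obtain ⟨ru, hru, hruspec⟩ := u.hf
  obtain ⟨rv, hrv, hrvspec⟩ := v.hf
  have habs := IRAux.app_abs P S
  refine ⟨⟨(IRAux.caseTm P S Q t ru rv).abs S,
      IRAux.abs_mem P S (IRAux.caseTm_memS P S Q ht hru hrv), ?_⟩, ?_, ?_, ?_⟩
  · rintro (y | z)
    · rw [habs, joinPsi, Sum.elim_inl,
        IRAux.caseTm_eval_sel P S Q (htt ru rv), hruspec]
      rfl
    · rw [habs, joinPsi, Sum.elim_inr,
        IRAux.caseTm_eval_sel P S Q (htf ru rv), hrvspec]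
      rfl
  · -- u ≤ join
    refine ⟨Sum.inl, ⟨(IRAux.pairTm P S Q kt).abs S,
      IRAux.abs_mem P S (IRAux.pairTm_memS P S Q hkt), fun y => ?_⟩,
      fun y => rfl, Q.p2, Q.p2_mem, fun y q hq => ⟨q, hq, Q.p2_spec _ _⟩⟩
    rw [habs, IRAux.pairTm_eval]
    rfl
  · -- v ≤ join
    refine ⟨Sum.inr, ⟨(IRAux.pairTm P S Q kf).abs S,
      IRAux.abs_mem P S (IRAux.pairTm_memS P S Q hkf), fun z => ?_⟩,
      fun z => rfl, Q.p2, Q.p2_mem, fun z q hq => ⟨q, hq, Q.p2_spec _ _⟩⟩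
    rw [habs, IRAux.pairTm_eval]
    rfl
  · -- least upper bound
    rintro w ⟨hu, ⟨rru, hrru, hrruspec⟩, hfu, lu, hlu, hluspec⟩
      ⟨hv, ⟨rrv, hrrv, hrrvspec⟩, hfv, lv, hlv, hlvspec⟩
    refine ⟨Sum.elim hu hv, ⟨(IRAux.caseTm P S Q t rru rrv).abs S,
      IRAux.abs_mem P S (IRAux.caseTm_memS P S Q ht hrru hrrv), ?_⟩, ?_,
      (IRAux.lTm P S Q t lu lv).abs S,
      IRAux.abs_mem P S (IRAux.lTm_memS P S Q ht hlu hlv), ?_⟩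
    · rintro (y | z)
      · rw [habs]
        show (IRAux.caseTm P S Q t rru rrv).eval (Q.code kt (u.ψ y)) = _
        rw [IRAux.caseTm_eval_sel P S Q (htt rru rrv), hrruspec]; rfl
      · rw [habs]
        show (IRAux.caseTm P S Q t rru rrv).eval (Q.code kf (v.ψ z)) = _
        rw [IRAux.caseTm_eval_sel P S Q (htf rru rrv), hrrvspec]; rfl
    · rintro (y | z)
      · exact hfu y
      · exact hfv z
    · rintro (y | z) q hq
      · obtain ⟨c, hc, hcs⟩ := hluspec y q hq
        refine ⟨c, hc, ?_⟩
        rw [habs]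
        show (IRAux.lTm P S Q t lu lv).eval (Q.code (Q.code kt (u.ψ y)) q) = _
        rw [IRAux.lTm_eval_sel P S Q (htt lu lv), hcs]
      · obtain ⟨c, hc, hcs⟩ := hlvspec z q hq
        refine ⟨c, hc, ?_⟩
        rw [habs]
        show (IRAux.lTm P S Q t lu lv).eval (Q.code (Q.code kf (v.ψ z)) q) = _
        rw [IRAux.lTm_eval_sel P S Q (htf lu lv), hcs]
end

section
/- Each fibre iR(X,φ) of the instance reducibility doctrine is a Heyting algebra: it has top, bottom, binary meets, binary joins, and a Heyting implication (f,α) ⇒ (g,β) satisfying (h,γ) ∧ (f,α) ≤ (g,β) iff (h,γ) ≤ (f,α) ⇒ (g,β). -/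
namespace IRH

variable {P : PCA}

theorem papp_some (a b : P.A) : P.papp (Part.some a) (Part.some b) = P.app a b := by
  simp [PCA.papp]

theorem dom_of_papp_left {x y : Part P.A} {a : P.A}
    (h : P.papp x y = Part.some a) : x.Dom := by
  have : a ∈ P.papp x y := by rw [h]; exact Part.mem_some a
  rcases Part.mem_bind_iff.1 this with ⟨b, hb, _⟩
  exact Part.dom_iff_mem.2 ⟨b, hb⟩

variable (S : SubPCA P)

/-- `app k' a` is defined. -/
theorem kapp_dom (a : P.A) : (P.app S.k' a).Dom :=
  dom_of_papp_left (S.k'_spec a a)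

/-- the value of `k'·a`. -/
def kV (a : P.A) : P.A := (P.app S.k' a).get (kapp_dom S a)

theorem kapp_eq (a : P.A) : P.app S.k' a = Part.some (kV S a) := by
  simp [kV]

theorem kV_mem {a : P.A} (h : S.mem a) : S.mem (kV S a) :=
  S.closed _ _ _ S.k'_mem h (kapp_eq S a)

theorem kV_app (a b : P.A) : P.app (kV S a) b = Part.some a := by
  have := S.k'_spec a b
  rwa [kapp_eq, papp_some] at this

/-- `s'·a` is defined. -/
theorem sapp_dom (a : P.A) : (P.app S.s' a).Dom := by
  have := S.s'_total a a
  exact (Part.dom_iff_mem.2 (by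
    rcases Part.dom_iff_mem.1 this with ⟨c, hc⟩
    rcases Part.mem_bind_iff.1 hc with ⟨b, hb, _⟩
    exact ⟨b, hb⟩))

def sV (a : P.A) : P.A := (P.app S.s' a).get (sapp_dom S a)

theorem sapp_eq (a : P.A) : P.app S.s' a = Part.some (sV S a) := by simp [sV]

theorem sV_mem {a : P.A} (h : S.mem a) : S.mem (sV S a) :=
  S.closed _ _ _ S.s'_mem h (sapp_eq S a)

theorem sV_app_dom (a b : P.A) : (P.app (sV S a) b).Dom := by
  have := S.s'_total a b
  rw [sapp_eq, papp_some] at this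
  exact this

def sV2 (a b : P.A) : P.A := (P.app (sV S a) b).get (sV_app_dom S a b)

theorem sV2_eq (a b : P.A) : P.app (sV S a) b = Part.some (sV2 S a b) := by simp [sV2]

theorem sV2_mem {a b : P.A} (ha : S.mem a) (hb : S.mem b) : S.mem (sV2 S a b) :=
  S.closed _ _ _ (sV_mem S ha) hb (sV2_eq S a b)

theorem sV2_app (a b c : P.A) :
    P.app (sV2 S a b) c = P.papp (P.app a c) (P.app b c) := by
  have := S.s'_spec a b c
  rwa [sapp_eq, papp_some, sV2_eq, papp_some] at this

/-- identity element -/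
def iE : P.A := sV2 S S.k' S.k'

theorem iE_mem : S.mem (iE S) := sV2_mem S S.k'_mem S.k'_mem

theorem iE_app (b : P.A) : P.app (iE S) b = Part.some b := by
  rw [iE, sV2_app, kapp_eq, papp_some, kV_app]

/-- tags -/
def t0 : P.A := S.k'
def t1 : P.A := kV S (iE S)

theorem t0_mem : S.mem (t0 S) := S.k'_mem
theorem t1_mem : S.mem (t1 S) := kV_mem S (iE_mem S)



inductive Expr (P : PCA) : ℕ → Type
  | var {n} : Fin n → Expr P n
  | const {n} : P.A → Expr P n
  | app {n} : Expr P n → Expr P n → Expr P n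

namespace Expr

variable {P : PCA}

def eval {n} : Expr P n → (Fin n → P.A) → Part P.A
  | .var i, ρ => Part.some (ρ i)
  | .const a, _ => Part.some a
  | .app e₁ e₂, ρ => P.papp (eval e₁ ρ) (eval e₂ ρ)

@[simp] theorem eval_var {n} (i : Fin n) (ρ : Fin n → P.A) :
    eval (.var i) ρ = Part.some (ρ i) := by simp [eval]
@[simp] theorem eval_const {n} (a : P.A) (ρ : Fin n → P.A) :
    eval (.const a) ρ = Part.some a := by simp [eval]
@[simp] theorem eval_app {n} (e₁ e₂ : Expr P n) (ρ : Fin n → P.A) :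
    eval (.app e₁ e₂) ρ = P.papp (eval e₁ ρ) (eval e₂ ρ) := by simp [eval]

/-- all constants lie in the sub-PCA -/
def SE (S : SubPCA P) {n} : Expr P n → Prop
  | .var _ => True
  | .const a => S.mem a
  | .app e₁ e₂ => SE S e₁ ∧ SE S e₂

@[simp] theorem SE_var {S : SubPCA P} {n} (i : Fin n) : SE S (.var i) := by simp [SE]
@[simp] theorem SE_const {S : SubPCA P} {n} {a : P.A} : SE S (Expr.const (n := n) a) ↔ S.mem a := by simp [SE]
@[simp] theorem SE_app {S : SubPCA P} {n} {e₁ e₂ : Expr P n} :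
    SE S (.app e₁ e₂) ↔ SE S e₁ ∧ SE S e₂ := by simp [SE]

theorem eval_mem {S : SubPCA P} : ∀ {n} (e : Expr P n) (ρ : Fin n → P.A),
    SE S e → (∀ i, S.mem (ρ i)) → ∀ a ∈ eval e ρ, S.mem a
  | _, .var i, ρ, _, hρ, a, ha => by
      rw [eval_var] at ha
      cases Part.mem_some_iff.1 ha; exact hρ i
  | _, .const c, ρ, he, _, a, ha => by
      rw [eval_const] at ha
      cases Part.mem_some_iff.1 ha; exact SE_const.1 he
  | _, .app e₁ e₂, ρ, he, hρ, a, ha => by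
      rw [eval_app, PCA.papp] at ha
      rcases Part.mem_bind_iff.1 ha with ⟨b, hb, ha⟩
      rcases Part.mem_bind_iff.1 ha with ⟨c, hc, ha⟩
      obtain ⟨he₁, he₂⟩ := SE_app.1 he
      exact S.closed b c a (eval_mem e₁ ρ he₁ hρ b hb) (eval_mem e₂ ρ he₂ hρ c hc)
        (Part.eq_some_iff.2 ha)

variable (S : SubPCA P)

/-- bracket abstraction of the first variable (substituted by `Fin.cons`). -/
def abs {n} : Expr P (n + 1) → Expr P n
  | .var i => Fin.cases (.const (iE S)) (fun j => .app (.const S.k') (.var j)) i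
  | .const a => .app (.const S.k') (.const a)
  | .app e₁ e₂ => .app (.app (.const S.s') (abs e₁)) (abs e₂)

theorem SE_abs {n} : ∀ (e : Expr P (n + 1)), SE S e → SE S (abs S e)
  | .var i, _ => by
      induction i using Fin.cases with
      | zero => simpa [abs, SE] using iE_mem S
      | succ j => simp [abs, SE, S.k'_mem]
  | .const a, he => by
      simp only [abs, SE_app, SE_const]
      exact ⟨S.k'_mem, SE_const.1 he⟩
  | .app e₁ e₂, he => by
      simp only [abs, SE_app, SE_const]
      obtain ⟨he₁, he₂⟩ := SE_app.1 he
      exact ⟨⟨S.s'_mem, SE_abs e₁ he₁⟩, SE_abs e₂ he₂⟩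

theorem abs_spec : ∀ {n} (e : Expr P (n + 1)) (ρ : Fin n → P.A),
    ∃ a, eval (abs S e) ρ = Part.some a ∧
      ∀ b, P.app a b = eval e (Fin.cons b ρ)
  | _, .var i, ρ => by
      induction i using Fin.cases with
      | zero =>
          refine ⟨iE S, by simp [abs, eval], fun b => ?_⟩
          rw [iE_app]; simp [eval]
      | succ j =>
          refine ⟨kV S (ρ j), ?_, fun b => ?_⟩
          · simp [abs, eval, papp_some, kapp_eq]
          · rw [kV_app]; simp [eval]
  | _, .const a, ρ => by
      refine ⟨kV S a, ?_, fun b => ?_⟩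
      · simp [abs, eval, papp_some, kapp_eq]
      · rw [kV_app]; simp [eval]
  | _, .app e₁ e₂, ρ => by
      obtain ⟨a₁, h₁, h₁'⟩ := abs_spec e₁ ρ
      obtain ⟨a₂, h₂, h₂'⟩ := abs_spec e₂ ρ
      refine ⟨sV2 S a₁ a₂, ?_, fun b => ?_⟩
      · simp [abs, eval, h₁, h₂, papp_some, sapp_eq, sV2_eq]
      · rw [sV2_app, h₁', h₂']; simp [eval]

/-- weakening: shift all variables up by one (new variable is 0). -/
def wk {n} : Expr P n → Expr P (n + 1)
  | .var i => .var i.succ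
  | .const a => .const a
  | .app e₁ e₂ => .app (wk e₁) (wk e₂)

theorem SE_wk {S : SubPCA P} : ∀ {n} (e : Expr P n), SE S e → SE S (wk e)
  | _, .var _, _ => by simp [wk]
  | _, .const _, h => by simpa [wk, SE_const] using h
  | _, .app e₁ e₂, h => by
      simp only [wk, SE_app]
      obtain ⟨h₁, h₂⟩ := SE_app.1 h
      exact ⟨SE_wk e₁ h₁, SE_wk e₂ h₂⟩

theorem eval_wk : ∀ {n} (e : Expr P n) (ρ : Fin n → P.A) (b : P.A),
    eval (wk e) (Fin.cons b ρ) = eval e ρ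
  | _, .var i, ρ, b => by simp [wk, eval]
  | _, .const a, ρ, b => by simp [wk]
  | _, .app e₁ e₂, ρ, b => by simp [wk, eval, eval_wk e₁, eval_wk e₂]

/-- thunk: a total value which, applied to anything, evaluates `e`. -/
def thk {n} (e : Expr P n) : Expr P n := abs S (wk e)

theorem SE_thk {n} (e : Expr P n) (h : SE S e) : SE S (thk S e) :=
  SE_abs S _ (SE_wk _ h)

theorem thk_spec {n} (e : Expr P n) (ρ : Fin n → P.A) :
    ∃ a, eval (thk S e) ρ = Part.some a ∧ ∀ b, P.app a b = eval e ρ := by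
  obtain ⟨a, ha, ha'⟩ := abs_spec S (wk e) ρ
  exact ⟨a, ha, fun b => by rw [ha' b, eval_wk]⟩

/-- lazy conditional on tags `t0`/`t1`. -/
def cond {n} (t e₀ e₁ : Expr P n) : Expr P n :=
  .app (.app (.app t (thk S e₀)) (thk S e₁)) (.const (iE S))

theorem SE_cond {n} {t e₀ e₁ : Expr P n} (ht : SE S t) (h₀ : SE S e₀) (h₁ : SE S e₁) :
    SE S (cond S t e₀ e₁) := by
  simp only [cond, SE_app, SE_const]
  exact ⟨⟨⟨ht, SE_thk S _ h₀⟩, SE_thk S _ h₁⟩, iE_mem S⟩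

theorem cond_t0 {n} (t e₀ e₁ : Expr P n) (ρ : Fin n → P.A)
    (ht : eval t ρ = Part.some (t0 S)) :
    eval (cond S t e₀ e₁) ρ = eval e₀ ρ := by
  obtain ⟨a₀, h₀, h₀'⟩ := thk_spec S e₀ ρ
  obtain ⟨a₁, h₁, h₁'⟩ := thk_spec S e₁ ρ
  rw [cond, eval_app, eval_app, eval_app, eval_const,
    ht, h₀, h₁, papp_some, t0, kapp_eq, papp_some, kV_app, papp_some, h₀']

theorem cond_t1 {n} (t e₀ e₁ : Expr P n) (ρ : Fin n → P.A)
    (ht : eval t ρ = Part.some (t1 S)) :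
    eval (cond S t e₀ e₁) ρ = eval e₁ ρ := by
  obtain ⟨a₀, h₀, h₀'⟩ := thk_spec S e₀ ρ
  obtain ⟨a₁, h₁, h₁'⟩ := thk_spec S e₁ ρ
  rw [cond, eval_app, eval_app, eval_app, eval_const,
    ht, h₀, h₁, papp_some, t1, kV_app, papp_some, iE_app, papp_some, h₁']

/-- a closed realizer in the sub-PCA from a 1-variable expression. -/
theorem real1 (e : Expr P 1) (he : SE S e) :
    ∃ r, S.mem r ∧ ∀ b, P.app r b = eval e (fun _ => b) := by
  obtain ⟨r, hr, hr'⟩ := abs_spec S e Fin.elim0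
  refine ⟨r, ?_, fun b => ?_⟩
  · exact eval_mem (abs S e) Fin.elim0 (SE_abs S e he) (fun i => i.elim0) r
      (by rw [hr]; exact Part.mem_some r)
  · rw [hr' b]
    congr 1
    funext i
    have : i = 0 := by omega
    subst this
    rfl

end Expr


namespace Expr

variable {P : PCA}

theorem evA {n} {e₁ e₂ : Expr P n} {ρ : Fin n → P.A} {a b : P.A}
    (h₁ : eval e₁ ρ = Part.some a) (h₂ : eval e₂ ρ = Part.some b) :
    eval (.app e₁ e₂) ρ = P.app a b := by
  rw [eval_app, h₁, h₂, papp_some]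

theorem evC {n} {c : P.A} {e : Expr P n} {ρ : Fin n → P.A} {b : P.A}
    (h : eval e ρ = Part.some b) :
    eval (.app (.const c) e) ρ = P.app c b :=
  evA (eval_const c ρ) h

variable {S : SubPCA P} (Q : Pairing P S)

/-- coding expression -/
def cd {n} (e₁ e₂ : Expr P n) : Expr P n := .app (.app (.const Q.pair) e₁) e₂

theorem SE_cd {n} {e₁ e₂ : Expr P n} (h₁ : SE S e₁) (h₂ : SE S e₂) :
    SE S (cd Q e₁ e₂) :=
  SE_app.2 ⟨SE_app.2 ⟨Q.pair_mem, h₁⟩, h₂⟩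

theorem eval_cd {n} {e₁ e₂ : Expr P n} {ρ : Fin n → P.A} {a b : P.A}
    (h₁ : eval e₁ ρ = Part.some a) (h₂ : eval e₂ ρ = Part.some b) :
    eval (cd Q e₁ e₂) ρ = Part.some (Q.code a b) := by
  rw [cd, eval_app, eval_app, eval_const, h₁, h₂, papp_some]
  exact Q.code_spec a b

def pr1 {n} (e : Expr P n) : Expr P n := .app (.const Q.p1) e
def pr2 {n} (e : Expr P n) : Expr P n := .app (.const Q.p2) e

theorem SE_pr1 {n} {e : Expr P n} (h : SE S e) : SE S (pr1 Q e) :=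
  SE_app.2 ⟨Q.p1_mem, h⟩
theorem SE_pr2 {n} {e : Expr P n} (h : SE S e) : SE S (pr2 Q e) :=
  SE_app.2 ⟨Q.p2_mem, h⟩

theorem eval_pr1 {n} {e : Expr P n} {ρ : Fin n → P.A} {a b : P.A}
    (h : eval e ρ = Part.some (Q.code a b)) : eval (pr1 Q e) ρ = Part.some a :=
  (evC h).trans (Q.p1_spec a b)

theorem eval_pr2 {n} {e : Expr P n} {ρ : Fin n → P.A} {a b : P.A}
    (h : eval e ρ = Part.some (Q.code a b)) : eval (pr2 Q e) ρ = Part.some b :=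
  (evC h).trans (Q.p2_spec a b)

/-- the value of `pair·a`. -/
theorem pairV_dom (a : P.A) : (P.app Q.pair a).Dom :=
  dom_of_papp_left (Q.code_spec a a)

def pairV (a : P.A) : P.A := (P.app Q.pair a).get (pairV_dom Q a)

theorem pairV_eq (a : P.A) : P.app Q.pair a = Part.some (pairV Q a) := by simp [pairV]

theorem pairV_mem {a : P.A} (h : S.mem a) : S.mem (pairV Q a) :=
  S.closed _ _ _ Q.pair_mem h (pairV_eq Q a)

theorem pairV_app (a b : P.A) : P.app (pairV Q a) b = Part.some (Q.code a b) := by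
  have := Q.code_spec a b
  rwa [pairV_eq, papp_some] at this

/-- value and spec of an abstracted expression at an environment. -/
theorem abs_dom (S : SubPCA P) {n} (e : Expr P (n + 1)) (ρ : Fin n → P.A) :
    (eval (abs S e) ρ).Dom := by
  obtain ⟨a, ha, -⟩ := abs_spec S e ρ
  rw [ha]; trivial

noncomputable def absV (S : SubPCA P) {n} (e : Expr P (n + 1)) (ρ : Fin n → P.A) : P.A :=
  (eval (abs S e) ρ).get (abs_dom S e ρ)

theorem absV_eq (S : SubPCA P) {n} (e : Expr P (n + 1)) (ρ : Fin n → P.A) :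
    eval (abs S e) ρ = Part.some (absV S e ρ) := by simp [absV]

theorem absV_app (S : SubPCA P) {n} (e : Expr P (n + 1)) (ρ : Fin n → P.A) (b : P.A) :
    P.app (absV S e ρ) b = eval e (Fin.cons b ρ) := by
  obtain ⟨a, ha, ha'⟩ := abs_spec S e ρ
  have : absV S e ρ = a := by
    have := absV_eq S e ρ
    rw [ha] at this
    exact (Part.some_inj.1 this).symm
  rw [this]; exact ha' b

end Expr
end IRH


namespace IRH

open Expr

variable {P : PCA} {S : SubPCA P} (Q : Pairing P S) {X : Type} {φ : X → P.A}

/-- tagged disjoint union of two sets of realizers -/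
def tset (R T : Set P.A) : Set P.A :=
  {a | (∃ d ∈ R, a = Q.code (t0 S) d) ∨ ∃ d ∈ T, a = Q.code (t1 S) d}

def topO (S : SubPCA P) (φ : X → P.A) : IRObj P S X φ :=
  { Y := X, ψ := φ, f := id,
    hf := ⟨iE S, iE_mem S, fun x => iE_app S _⟩, α := fun _ => ∅ }

theorem le_top (u : IRObj P S X φ) : IRle P S Q u (topO S φ) :=
  ⟨u.f, u.hf, fun _ => rfl, S.k', S.k'_mem, fun _ q hq => hq.elim⟩

def botO (S : SubPCA P) (φ : X → P.A) : IRObj P S X φ :=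
  { Y := Empty, ψ := fun y => y.elim, f := fun y => y.elim,
    hf := ⟨iE S, iE_mem S, fun y => y.elim⟩, α := fun y => y.elim }

theorem bot_le (u : IRObj P S X φ) : IRle P S Q (botO S φ) u :=
  ⟨fun y => y.elim, ⟨iE S, iE_mem S, fun y => y.elim⟩, fun y => y.elim,
    S.k', S.k'_mem, fun y => y.elim⟩

/-- the meet -/
def meetO (u v : IRObj P S X φ) : IRObj P S X φ where
  Y := {p : u.Y × v.Y // u.f p.1 = v.f p.2}
  ψ := fun p => Q.code (u.ψ p.1.1) (v.ψ p.1.2)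
  f := fun p => u.f p.1.1
  hf := by
    obtain ⟨r, hrS, hr⟩ := u.hf
    obtain ⟨r', hrS', hr'⟩ := real1 S (.app (.const r) (pr1 Q (.var 0)))
      (SE_app.2 ⟨hrS, SE_pr1 Q (SE_var 0)⟩)
    refine ⟨r', hrS', fun p => ?_⟩
    rw [hr' _]
    have h1 : eval (pr1 Q (.var 0)) (fun _ : Fin 1 => Q.code (u.ψ p.1.1) (v.ψ p.1.2)) =
        Part.some (u.ψ p.1.1) := eval_pr1 Q (eval_var (0 : Fin 1) _)
    exact (evC h1).trans (hr p.1.1)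
  α := fun p => tset Q (u.α p.1.1) (v.α p.1.2)

theorem meet_le_left (u v : IRObj P S X φ) : IRle P S Q (meetO Q u v) u := by
  refine ⟨fun p => p.1.1, ⟨Q.p1, Q.p1_mem, fun p => Q.p1_spec _ _⟩, fun p => rfl, ?_⟩
  obtain ⟨l, lS, hl⟩ := real1 S (cd Q (.const (t0 S)) (pr2 Q (.var 0)))
    (SE_cd Q (SE_const.2 (t0_mem S)) (SE_pr2 Q (SE_var 0)))
  refine ⟨l, lS, fun p q hq => ⟨Q.code (t0 S) q, Or.inl ⟨q, hq, rfl⟩, ?_⟩⟩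
  rw [hl _]
  exact eval_cd Q (eval_const _ _) (eval_pr2 Q (eval_var (0 : Fin 1) _))

theorem meet_le_right (u v : IRObj P S X φ) : IRle P S Q (meetO Q u v) v := by
  refine ⟨fun p => p.1.2, ⟨Q.p2, Q.p2_mem, fun p => Q.p2_spec _ _⟩,
    fun p => p.2.symm, ?_⟩
  obtain ⟨l, lS, hl⟩ := real1 S (cd Q (.const (t1 S)) (pr2 Q (.var 0)))
    (SE_cd Q (SE_const.2 (t1_mem S)) (SE_pr2 Q (SE_var 0)))
  refine ⟨l, lS, fun p q hq => ⟨Q.code (t1 S) q, Or.inr ⟨q, hq, rfl⟩, ?_⟩⟩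
  rw [hl _]
  exact eval_cd Q (eval_const _ _) (eval_pr2 Q (eval_var (0 : Fin 1) _))

theorem le_meet (u v w : IRObj P S X φ) (h₁ : IRle P S Q w u) (h₂ : IRle P S Q w v) :
    IRle P S Q w (meetO Q u v) := by
  obtain ⟨g₁, ⟨r₁, r₁S, hr₁⟩, hc₁, l₁, l₁S, hl₁⟩ := h₁
  obtain ⟨g₂, ⟨r₂, r₂S, hr₂⟩, hc₂, l₂, l₂S, hl₂⟩ := h₂
  refine ⟨fun y => ⟨(g₁ y, g₂ y), by rw [hc₁ y, hc₂ y]⟩, ?_, fun y => hc₁ y, ?_⟩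
  · obtain ⟨r, rS, hr⟩ := real1 S
      (cd Q (.app (.const r₁) (.var 0)) (.app (.const r₂) (.var 0)))
      (SE_cd Q (SE_app.2 ⟨r₁S, SE_var 0⟩) (SE_app.2 ⟨r₂S, SE_var 0⟩))
    refine ⟨r, rS, fun y => ?_⟩
    rw [hr _]
    exact eval_cd Q ((evC (eval_var (0 : Fin 1) _)).trans (hr₁ y))
      ((evC (eval_var (0 : Fin 1) _)).trans (hr₂ y))
  · -- decoder: case on the tag
    obtain ⟨l, lS, hl⟩ := real1 S
      (Expr.cond S (pr1 Q (pr2 Q (.var 0)))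
        (.app (.const l₁) (cd Q (pr1 Q (.var 0)) (pr2 Q (pr2 Q (.var 0)))))
        (.app (.const l₂) (cd Q (pr1 Q (.var 0)) (pr2 Q (pr2 Q (.var 0))))))
      (SE_cond S (SE_pr1 Q (SE_pr2 Q (SE_var 0)))
        (SE_app.2 ⟨l₁S, SE_cd Q (SE_pr1 Q (SE_var 0)) (SE_pr2 Q (SE_pr2 Q (SE_var 0)))⟩)
        (SE_app.2 ⟨l₂S, SE_cd Q (SE_pr1 Q (SE_var 0)) (SE_pr2 Q (SE_pr2 Q (SE_var 0)))⟩))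
    refine ⟨l, lS, fun y q hq => ?_⟩
    rcases hq with ⟨d, hd, rfl⟩ | ⟨d, hd, rfl⟩
    · obtain ⟨c, hc, hcl⟩ := hl₁ y d hd
      refine ⟨c, hc, ?_⟩
      rw [hl _, Expr.cond_t0 S _ _ _ _
        (eval_pr1 Q (eval_pr2 Q (eval_var (0 : Fin 1) _)))]
      exact (evC (eval_cd Q (eval_pr1 Q (eval_var (0 : Fin 1) _))
        (eval_pr2 Q (eval_pr2 Q (eval_var (0 : Fin 1) _))))).trans hcl
    · obtain ⟨c, hc, hcl⟩ := hl₂ y d hd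
      refine ⟨c, hc, ?_⟩
      rw [hl _, Expr.cond_t1 S _ _ _ _
        (eval_pr1 Q (eval_pr2 Q (eval_var (0 : Fin 1) _)))]
      exact (evC (eval_cd Q (eval_pr1 Q (eval_var (0 : Fin 1) _))
        (eval_pr2 Q (eval_pr2 Q (eval_var (0 : Fin 1) _))))).trans hcl


/-- the join -/
def joinO (u v : IRObj P S X φ) : IRObj P S X φ where
  Y := u.Y ⊕ v.Y
  ψ := Sum.elim (fun y => Q.code (t0 S) (u.ψ y)) (fun z => Q.code (t1 S) (v.ψ z))
  f := Sum.elim u.f v.f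
  hf := by
    obtain ⟨r₁, r₁S, hr₁⟩ := u.hf
    obtain ⟨r₂, r₂S, hr₂⟩ := v.hf
    obtain ⟨r, rS, hr⟩ := real1 S
      (Expr.cond S (pr1 Q (.var 0))
        (.app (.const r₁) (pr2 Q (.var 0))) (.app (.const r₂) (pr2 Q (.var 0))))
      (SE_cond S (SE_pr1 Q (SE_var 0))
        (SE_app.2 ⟨r₁S, SE_pr2 Q (SE_var 0)⟩) (SE_app.2 ⟨r₂S, SE_pr2 Q (SE_var 0)⟩))
    refine ⟨r, rS, fun s => ?_⟩
    rcases s with y | z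
    · rw [hr _, Expr.cond_t0 S _ _ _ _ (eval_pr1 Q (eval_var (0 : Fin 1) _))]
      exact (evC (eval_pr2 Q (eval_var (0 : Fin 1) _))).trans (hr₁ y)
    · rw [hr _, Expr.cond_t1 S _ _ _ _ (eval_pr1 Q (eval_var (0 : Fin 1) _))]
      exact (evC (eval_pr2 Q (eval_var (0 : Fin 1) _))).trans (hr₂ z)
  α := Sum.elim u.α v.α

theorem left_le_join (u v : IRObj P S X φ) : IRle P S Q u (joinO Q u v) := by
  refine ⟨Sum.inl, ⟨pairV Q (t0 S), pairV_mem Q (t0_mem S), fun y => pairV_app Q _ _⟩,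
    fun y => rfl, Q.p2, Q.p2_mem, fun y q hq => ⟨q, hq, Q.p2_spec _ _⟩⟩

theorem right_le_join (u v : IRObj P S X φ) : IRle P S Q v (joinO Q u v) := by
  refine ⟨Sum.inr, ⟨pairV Q (t1 S), pairV_mem Q (t1_mem S), fun z => pairV_app Q _ _⟩,
    fun z => rfl, Q.p2, Q.p2_mem, fun z q hq => ⟨q, hq, Q.p2_spec _ _⟩⟩

theorem join_le (u v w : IRObj P S X φ) (h₁ : IRle P S Q u w) (h₂ : IRle P S Q v w) :
    IRle P S Q (joinO Q u v) w := by
  obtain ⟨g₁, ⟨r₁, r₁S, hr₁⟩, hc₁, l₁, l₁S, hl₁⟩ := h₁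
  obtain ⟨g₂, ⟨r₂, r₂S, hr₂⟩, hc₂, l₂, l₂S, hl₂⟩ := h₂
  refine ⟨Sum.elim g₁ g₂, ?_, ?_, ?_⟩
  · obtain ⟨r, rS, hr⟩ := real1 S
      (Expr.cond S (pr1 Q (.var 0))
        (.app (.const r₁) (pr2 Q (.var 0))) (.app (.const r₂) (pr2 Q (.var 0))))
      (SE_cond S (SE_pr1 Q (SE_var 0))
        (SE_app.2 ⟨r₁S, SE_pr2 Q (SE_var 0)⟩) (SE_app.2 ⟨r₂S, SE_pr2 Q (SE_var 0)⟩))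
    refine ⟨r, rS, fun s => ?_⟩
    rcases s with y | z
    · rw [hr _, Expr.cond_t0 S _ _ _ _ (eval_pr1 Q (eval_var (0 : Fin 1) _))]
      exact (evC (eval_pr2 Q (eval_var (0 : Fin 1) _))).trans (hr₁ y)
    · rw [hr _, Expr.cond_t1 S _ _ _ _ (eval_pr1 Q (eval_var (0 : Fin 1) _))]
      exact (evC (eval_pr2 Q (eval_var (0 : Fin 1) _))).trans (hr₂ z)
  · rintro (y | z)
    · exact hc₁ y
    · exact hc₂ z
  · obtain ⟨l, lS, hl⟩ := real1 S
      (Expr.cond S (pr1 Q (pr1 Q (.var 0)))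
        (.app (.const l₁) (cd Q (pr2 Q (pr1 Q (.var 0))) (pr2 Q (.var 0))))
        (.app (.const l₂) (cd Q (pr2 Q (pr1 Q (.var 0))) (pr2 Q (.var 0)))))
      (SE_cond S (SE_pr1 Q (SE_pr1 Q (SE_var 0)))
        (SE_app.2 ⟨l₁S, SE_cd Q (SE_pr2 Q (SE_pr1 Q (SE_var 0))) (SE_pr2 Q (SE_var 0))⟩)
        (SE_app.2 ⟨l₂S, SE_cd Q (SE_pr2 Q (SE_pr1 Q (SE_var 0))) (SE_pr2 Q (SE_var 0))⟩))
    refine ⟨l, lS, ?_⟩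
    rintro (y | z) q hq
    · obtain ⟨c, hc, hcl⟩ := hl₁ y q hq
      refine ⟨c, hc, ?_⟩
      rw [hl _, Expr.cond_t0 S _ _ _ _
        (eval_pr1 Q (eval_pr1 Q (eval_var (0 : Fin 1) _)))]
      exact (evC (eval_cd Q (eval_pr2 Q (eval_pr1 Q (eval_var (0 : Fin 1) _)))
        (eval_pr2 Q (eval_var (0 : Fin 1) _)))).trans hcl
    · obtain ⟨c, hc, hcl⟩ := hl₂ z q hq
      refine ⟨c, hc, ?_⟩
      rw [hl _, Expr.cond_t1 S _ _ _ _
        (eval_pr1 Q (eval_pr1 Q (eval_var (0 : Fin 1) _)))]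
      exact (evC (eval_cd Q (eval_pr2 Q (eval_pr1 Q (eval_var (0 : Fin 1) _)))
        (eval_pr2 Q (eval_var (0 : Fin 1) _)))).trans hcl


/-- underlying type of the Heyting implication -/
structure ImpY {P : PCA} {S : SubPCA P} (Q : Pairing P S) {X : Type} {φ : X → P.A}
    (u v : IRObj P S X φ) where
  x : X
  kk : {y : u.Y // u.f y = x} → {z : v.Y // v.f z = x}
  R : Set P.A
  r : P.A
  l : P.A
  hr : ∀ yy : {y : u.Y // u.f y = x}, P.app r (u.ψ yy.1) = Part.some (v.ψ (kk yy).1)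
  hl : ∀ yy : {y : u.Y // u.f y = x}, ∀ q ∈ v.α (kk yy).1,
      ∃ c ∈ tset Q R (u.α yy.1), P.app l (Q.code (u.ψ yy.1) q) = Part.some c

/-- the Heyting implication -/
def impO (u v : IRObj P S X φ) : IRObj P S X φ where
  Y := ImpY Q u v
  ψ := fun t => Q.code (φ t.x) (Q.code t.r t.l)
  f := fun t => t.x
  hf := ⟨Q.p1, Q.p1_mem, fun t => Q.p1_spec _ _⟩
  α := fun t => t.R

theorem le_imp (u v w : IRObj P S X φ) (h : IRle P S Q (meetO Q w u) v) :
    IRle P S Q w (impO Q u v) := by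
  obtain ⟨g, ⟨rm, rmS, hrm⟩, hcm, lm, lmS, hlm⟩ := h
  set er : Expr P 2 := .app (.const rm) (cd Q (.var 1) (.var 0)) with her
  set el : Expr P 2 :=
    .app (.const lm) (cd Q (cd Q (.var 1) (pr1 Q (.var 0))) (pr2 Q (.var 0))) with hel
  have HR : ∀ (y : w.Y) (zz : {z : u.Y // u.f z = w.f y}),
      P.app (absV S er (fun _ => w.ψ y)) (u.ψ zz.1) =
        Part.some (v.ψ (g ⟨(y, zz.1), zz.2.symm⟩)) := by
    intro y zz
    rw [absV_app]
    have h0 : eval (.var (0 : Fin 2)) (Fin.cons (u.ψ zz.1) (fun _ => w.ψ y)) =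
        Part.some (u.ψ zz.1) := eval_var _ _
    have h1 : eval (.var (1 : Fin 2)) (Fin.cons (u.ψ zz.1) (fun _ => w.ψ y)) =
        Part.some (w.ψ y) := eval_var _ _
    exact (evC (eval_cd Q h1 h0)).trans (hrm ⟨(y, zz.1), zz.2.symm⟩)
  have HL : ∀ (y : w.Y) (zz : {z : u.Y // u.f z = w.f y}),
      ∀ q ∈ v.α (g ⟨(y, zz.1), zz.2.symm⟩),
      ∃ c ∈ tset Q (w.α y) (u.α zz.1),
        P.app (absV S el (fun _ => w.ψ y)) (Q.code (u.ψ zz.1) q) = Part.some c := by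
    intro y zz q hq
    obtain ⟨c, hc, hcl⟩ := hlm ⟨(y, zz.1), zz.2.symm⟩ q hq
    refine ⟨c, hc, ?_⟩
    rw [absV_app]
    have h0 : eval (.var (0 : Fin 2)) (Fin.cons (Q.code (u.ψ zz.1) q) (fun _ => w.ψ y)) =
        Part.some (Q.code (u.ψ zz.1) q) := eval_var _ _
    have h1 : eval (.var (1 : Fin 2)) (Fin.cons (Q.code (u.ψ zz.1) q) (fun _ => w.ψ y)) =
        Part.some (w.ψ y) := eval_var _ _
    exact (evC (eval_cd Q (eval_cd Q h1 (eval_pr1 Q h0)) (eval_pr2 Q h0))).trans hcl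
  refine ⟨fun y => ⟨w.f y, fun zz => ⟨g ⟨(y, zz.1), zz.2.symm⟩, hcm _⟩, w.α y,
      absV S er (fun _ => w.ψ y), absV S el (fun _ => w.ψ y),
      fun zz => HR y zz, fun zz q hq => HL y zz q hq⟩, ?_, fun y => rfl,
    Q.p2, Q.p2_mem, fun y q hq => ⟨q, hq, Q.p2_spec _ _⟩⟩
  obtain ⟨rw₀, rwS, hrw⟩ := w.hf
  have SEer : SE S er := SE_app.2 ⟨rmS, SE_cd Q (SE_var _) (SE_var _)⟩
  have SEel : SE S el := SE_app.2 ⟨lmS,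
    SE_cd Q (SE_cd Q (SE_var _) (SE_pr1 Q (SE_var _))) (SE_pr2 Q (SE_var _))⟩
  obtain ⟨r, rS, hr⟩ := real1 S
    (cd Q (.app (.const rw₀) (.var 0)) (cd Q (abs S er) (abs S el)))
    (SE_cd Q (SE_app.2 ⟨rwS, SE_var _⟩)
      (SE_cd Q (SE_abs S er SEer) (SE_abs S el SEel)))
  refine ⟨r, rS, fun y => ?_⟩
  rw [hr _]
  have h0 : eval (.var (0 : Fin 1)) (fun _ : Fin 1 => w.ψ y) = Part.some (w.ψ y) :=
    eval_var _ _
  exact eval_cd Q ((evC h0).trans (hrw y))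
    (eval_cd Q (absV_eq S er _) (absV_eq S el _))

theorem imp_le (u v w : IRObj P S X φ) (h : IRle P S Q w (impO Q u v)) :
    IRle P S Q (meetO Q w u) v := by
  obtain ⟨g, ⟨r₀, r₀S, hr₀⟩, hc₀, l₀, l₀S, hl₀⟩ := h
  have zmem : ∀ p : {p : w.Y × u.Y // w.f p.1 = u.f p.2}, u.f p.1.2 = (g p.1.1).x :=
    fun p => p.2.symm.trans (hc₀ p.1.1).symm
  refine ⟨fun p => ((g p.1.1).kk ⟨p.1.2, zmem p⟩).1, ?_, ?_, ?_⟩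
  · obtain ⟨r, rS, hr⟩ := real1 S
      (.app (pr1 Q (pr2 Q (.app (.const r₀) (pr1 Q (.var 0))))) (pr2 Q (.var 0)))
      (SE_app.2 ⟨SE_pr1 Q (SE_pr2 Q (SE_app.2 ⟨r₀S, SE_pr1 Q (SE_var _)⟩)),
        SE_pr2 Q (SE_var _)⟩)
    refine ⟨r, rS, fun p => ?_⟩
    rw [hr _]
    have h0 : eval (.var (0 : Fin 1))
        (fun _ : Fin 1 => Q.code (w.ψ p.1.1) (u.ψ p.1.2)) =
        Part.some (Q.code (w.ψ p.1.1) (u.ψ p.1.2)) := eval_var _ _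
    have h1 : eval (.app (.const r₀) (pr1 Q (.var 0)))
        (fun _ : Fin 1 => Q.code (w.ψ p.1.1) (u.ψ p.1.2)) =
        Part.some (Q.code (φ (g p.1.1).x) (Q.code (g p.1.1).r (g p.1.1).l)) :=
      (evC (eval_pr1 Q h0)).trans (hr₀ p.1.1)
    exact (evA (eval_pr1 Q (eval_pr2 Q h1)) (eval_pr2 Q h0)).trans
      ((g p.1.1).hr ⟨p.1.2, zmem p⟩)
  · exact fun p => (((g p.1.1).kk ⟨p.1.2, zmem p⟩).2).trans (hc₀ p.1.1)
  · obtain ⟨l, lS, hl⟩ := real1 S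
      (Expr.cond S
        (pr1 Q (.app (pr2 Q (pr2 Q (.app (.const r₀) (pr1 Q (pr1 Q (.var 0))))))
          (cd Q (pr2 Q (pr1 Q (.var 0))) (pr2 Q (.var 0)))))
        (cd Q (.const (t0 S)) (.app (.const l₀) (cd Q (pr1 Q (pr1 Q (.var 0)))
          (pr2 Q (.app (pr2 Q (pr2 Q (.app (.const r₀) (pr1 Q (pr1 Q (.var 0))))))
            (cd Q (pr2 Q (pr1 Q (.var 0))) (pr2 Q (.var 0))))))))
        (cd Q (.const (t1 S))
          (pr2 Q (.app (pr2 Q (pr2 Q (.app (.const r₀) (pr1 Q (pr1 Q (.var 0))))))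
            (cd Q (pr2 Q (pr1 Q (.var 0))) (pr2 Q (.var 0)))))))
      (by
        have hc : SE S (Expr.app (pr2 Q (pr2 Q (.app (.const r₀)
            (pr1 Q (pr1 Q (.var (0 : Fin 1)))))))
            (cd Q (pr2 Q (pr1 Q (.var 0))) (pr2 Q (.var 0)))) :=
          SE_app.2 ⟨SE_pr2 Q (SE_pr2 Q (SE_app.2 ⟨r₀S, SE_pr1 Q (SE_pr1 Q (SE_var _))⟩)),
            SE_cd Q (SE_pr2 Q (SE_pr1 Q (SE_var _))) (SE_pr2 Q (SE_var _))⟩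
        exact SE_cond S (SE_pr1 Q hc)
          (SE_cd Q (SE_const.2 (t0_mem S)) (SE_app.2 ⟨l₀S,
            SE_cd Q (SE_pr1 Q (SE_pr1 Q (SE_var _))) (SE_pr2 Q hc)⟩))
          (SE_cd Q (SE_const.2 (t1_mem S)) (SE_pr2 Q hc)))
    refine ⟨l, lS, fun p q hq => ?_⟩
    obtain ⟨c', hc', hcl⟩ := (g p.1.1).hl ⟨p.1.2, zmem p⟩ q hq
    have h0 : eval (.var (0 : Fin 1))
        (fun _ : Fin 1 => Q.code (Q.code (w.ψ p.1.1) (u.ψ p.1.2)) q) =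
        Part.some (Q.code (Q.code (w.ψ p.1.1) (u.ψ p.1.2)) q) := eval_var _ _
    have hw : eval (pr1 Q (pr1 Q (.var 0)))
        (fun _ : Fin 1 => Q.code (Q.code (w.ψ p.1.1) (u.ψ p.1.2)) q) =
        Part.some (w.ψ p.1.1) := eval_pr1 Q (eval_pr1 Q h0)
    have h1 : eval (.app (.const r₀) (pr1 Q (pr1 Q (.var 0))))
        (fun _ : Fin 1 => Q.code (Q.code (w.ψ p.1.1) (u.ψ p.1.2)) q) =
        Part.some (Q.code (φ (g p.1.1).x) (Q.code (g p.1.1).r (g p.1.1).l)) :=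
      (evC hw).trans (hr₀ p.1.1)
    have hcE : eval (Expr.app (pr2 Q (pr2 Q (.app (.const r₀) (pr1 Q (pr1 Q (.var 0))))))
        (cd Q (pr2 Q (pr1 Q (.var 0))) (pr2 Q (.var 0))))
        (fun _ : Fin 1 => Q.code (Q.code (w.ψ p.1.1) (u.ψ p.1.2)) q) =
        Part.some c' :=
      (evA (eval_pr2 Q (eval_pr2 Q h1))
        (eval_cd Q (eval_pr2 Q (eval_pr1 Q h0)) (eval_pr2 Q h0))).trans hcl
    rcases hc' with ⟨d, hd, rfl⟩ | ⟨d, hd, rfl⟩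
    · obtain ⟨e', he', hel⟩ := hl₀ p.1.1 d hd
      refine ⟨Q.code (t0 S) e', Or.inl ⟨e', he', rfl⟩, ?_⟩
      exact (hl _).trans ((Expr.cond_t0 S _ _ _ _ (eval_pr1 Q hcE)).trans
        (eval_cd Q (eval_const _ _)
          ((evC (eval_cd Q hw (eval_pr2 Q hcE))).trans hel)))
    · refine ⟨Q.code (t1 S) d, Or.inr ⟨d, hd, rfl⟩, ?_⟩
      exact (hl _).trans ((Expr.cond_t1 S _ _ _ _ (eval_pr1 Q hcE)).trans
        (eval_cd Q (eval_const _ _) (eval_pr2 Q hcE)))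

end IRH


/-- Each fibre `iR(X,φ)` of the instance reducibility doctrine is a Heyting
(pre)algebra: it has a top, a bottom, binary meets, binary joins and a Heyting
implication satisfying `(h,γ) ∧ (f,α) ≤ (g,β) ↔ (h,γ) ≤ (f,α) ⇒ (g,β)`. -/
theorem iR_fibre_heyting (P : PCA) (S : SubPCA P) (Q : Pairing P S)
    (X : Type) (φ : X → P.A) :
    ∃ (top bot : IRObj P S X φ)
      (meet join imp : IRObj P S X φ → IRObj P S X φ → IRObj P S X φ),
      (∀ u, IRle P S Q u top) ∧
      (∀ u, IRle P S Q bot u) ∧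
      (∀ u v, IRle P S Q (meet u v) u ∧ IRle P S Q (meet u v) v ∧
        ∀ w, IRle P S Q w u → IRle P S Q w v → IRle P S Q w (meet u v)) ∧
      (∀ u v, IRle P S Q u (join u v) ∧ IRle P S Q v (join u v) ∧
        ∀ w, IRle P S Q u w → IRle P S Q v w → IRle P S Q (join u v) w) ∧
      (∀ u v w, IRle P S Q (meet w u) v ↔ IRle P S Q w (imp u v)) :=
  ⟨IRH.topO S φ, IRH.botO S φ, IRH.meetO Q, IRH.joinO Q, IRH.impO Q,
    fun u => IRH.le_top Q u, fun u => IRH.bot_le Q u,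
    fun u v => ⟨IRH.meet_le_left Q u v, IRH.meet_le_right Q u v,
      fun w => IRH.le_meet Q u v w⟩,
    fun u v => ⟨IRH.left_le_join Q u v, IRH.right_le_join Q u v,
      fun w => IRH.join_le Q u v w⟩,
    fun u v w => ⟨IRH.le_imp Q u v w, IRH.imp_le Q u v w⟩⟩
end

section
/- The extended Weihrauch doctrine and the instance reducibility doctrine are naturally isomorphic: for every partitioned assembly (X,φ), the map sending (f : (Y,ψ) → (X,φ), α) to the function (x,a) ↦ {α(y) : y ∈ f⁻¹(x), ψ(y) = a} is an order isomorphism iR(X,φ) ≅ eW(X,φ), natural in (X,φ). -/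
/-- A morphism of partitioned assemblies `(Y,ψ) → (X,φ)`: a function realized
by an element of the sub-PCA `A'`. -/
structure PAMor (P : PCA) (S : SubPCA P) (Y : Type) (ψ : Y → P.A)
    (X : Type) (φ : X → P.A) where
  toFun : Y → X
  realized : ∃ r : P.A, S.mem r ∧ ∀ y : Y, P.app r (ψ y) = Part.some (φ (toFun y))

/-- Reindexing `iR_F : iR(X,φ) → iR(Y,ψ)` of the instance reducibility
doctrine, computed by pullback in partitioned assemblies. -/
def irReindex (P : PCA) (S : SubPCA P) (Q : Pairing P S)
    {Y : Type} {ψ : Y → P.A} {X : Type} {φ : X → P.A}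
    (F : PAMor P S Y ψ X φ) (w : IRObj P S X φ) : IRObj P S Y ψ where
  Y := {p : Y × w.Y // F.toFun p.1 = w.f p.2}
  ψ := fun p => Q.code (ψ p.val.1) (w.ψ p.val.2)
  f := fun p => p.val.1
  hf := ⟨Q.p1, Q.p1_mem, fun p => Q.p1_spec _ _⟩
  α := fun p => w.α p.val.2

/-- The order of the extended Weihrauch doctrine on the fibre over `(X,φ)`:
functions `X × A → 𝒫𝒫(A)` with the extended Weihrauch reducibility relation. -/
def eWLe (P : PCA) (S : SubPCA P) (Q : Pairing P S) {X : Type} (φ : X → P.A)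
    (g h : X × P.A → Set (Set P.A)) : Prop :=
  ∃ l1 l2 : P.A, S.mem l1 ∧ S.mem l2 ∧
    ∀ (x : X) (a : P.A), g (x, a) ≠ ∅ →
      ∃ r : P.A, P.app l1 (Q.code (φ x) a) = Part.some r ∧ h (x, r) ≠ ∅ ∧
        ∀ A0 ∈ g (x, a), ∃ B ∈ h (x, r), ∀ q ∈ B, ∃ c ∈ A0,
          P.app l2 (Q.code a q) = Part.some c

/-- The comparison map `iR(X,φ) → eW(X,φ)`, sending `(f,α)` to
`(x,a) ↦ {α(y) : y ∈ f⁻¹(x), ψ(y) = a}`. -/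
def irToEW (P : PCA) (S : SubPCA P) {X : Type} {φ : X → P.A}
    (u : IRObj P S X φ) : X × P.A → Set (Set P.A) :=
  fun p => {A0 | ∃ y : u.Y, u.f y = p.1 ∧ u.ψ y = p.2 ∧ u.α y = A0}

/-- The inverse comparison map `eW(X,φ) → iR(X,φ)`, sending `g` to the pair of
projections over the partitioned assembly `{(x,a,A₀) : A₀ ∈ g(x,a)}` with
realizer `⟨φ(x),a⟩`. -/
def ewToIR (P : PCA) (S : SubPCA P) (Q : Pairing P S) {X : Type} (φ : X → P.A)
    (g : X × P.A → Set (Set P.A)) : IRObj P S X φ where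
  Y := Σ x : X, Σ a : P.A, {A0 : Set P.A // A0 ∈ g (x, a)}
  ψ := fun p => Q.code (φ p.1) p.2.1
  f := fun p => p.1
  hf := ⟨Q.p1, Q.p1_mem, fun p => Q.p1_spec _ _⟩
  α := fun p => p.2.2.val

/-- Reindexing of the extended Weihrauch doctrine along a morphism of
partitioned assemblies. -/
def eWmap (P : PCA) (S : SubPCA P) (Q : Pairing P S)
    {Y : Type} {ψ : Y → P.A} {X : Type} {φ : X → P.A}
    (F : PAMor P S Y ψ X φ) (g : X × P.A → Set (Set P.A)) :
    Y × P.A → Set (Set P.A) :=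
  fun p => {A0 | ∃ a' : P.A, p.2 = Q.code (ψ p.1) a' ∧ A0 ∈ g (F.toFun p.1, a')}


namespace IsoAux

lemma papp_some_some (P : PCA) (a b : P.A) :
    P.papp (Part.some a) (Part.some b) = P.app a b := by
  simp [PCA.papp]

lemma papp_some_right (P : PCA) (x : Part P.A) (b : P.A) :
    P.papp x (Part.some b) = x.bind (fun a => P.app a b) := by
  simp [PCA.papp]

lemma papp_some_left (P : PCA) (a : P.A) (y : Part P.A) :
    P.papp (Part.some a) y = y.bind (P.app a) := by
  simp [PCA.papp]

lemma eq_some_of_papp (P : PCA) {x : Part P.A} {b c : P.A}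
    (h : P.papp x (Part.some b) = Part.some c) :
    ∃ a, x = Part.some a ∧ P.app a b = Part.some c := by
  rw [papp_some_right] at h
  have hc : c ∈ x.bind (fun a => P.app a b) := by rw [h]; exact Part.mem_some c
  obtain ⟨a, ha, hab⟩ := Part.mem_bind_iff.mp hc
  exact ⟨a, Part.eq_some_iff.mpr ha, Part.eq_some_iff.mpr hab⟩

lemma kApp (P : PCA) (S : SubPCA P) (a : P.A) :
    ∃ ka, P.app S.k' a = Part.some ka ∧ (S.mem a → S.mem ka) ∧
      ∀ b, P.app ka b = Part.some a := by
  obtain ⟨ka, hka, _⟩ := eq_some_of_papp P (S.k'_spec a a)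
  refine ⟨ka, hka, fun hm => S.closed _ _ _ S.k'_mem hm hka, fun b => ?_⟩
  have := S.k'_spec a b
  rw [hka, papp_some_some] at this
  exact this

lemma sApp (P : PCA) (S : SubPCA P) (f g : P.A) :
    ∃ w, (S.mem f → S.mem g → S.mem w) ∧
      ∀ c, P.app w c = P.papp (P.app f c) (P.app g c) := by
  have hd := S.s'_total f g
  have hxe : P.papp (P.app S.s' f) (Part.some g)
      = Part.some ((P.papp (P.app S.s' f) (Part.some g)).get hd) :=
    (Part.some_get hd).symm
  obtain ⟨sf, hsf, hsfg⟩ := eq_some_of_papp P hxe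
  refine ⟨(P.papp (P.app S.s' f) (Part.some g)).get hd, ?_, fun c => ?_⟩
  · intro hf hg
    have h1 : S.mem sf := S.closed _ _ _ S.s'_mem hf hsf
    exact S.closed _ _ _ h1 hg hsfg
  · have hs := S.s'_spec f g c
    rw [hxe, papp_some_some] at hs
    exact hs

lemma compApp (P : PCA) (S : SubPCA P) (f g : P.A) (hf : S.mem f) (hg : S.mem g) :
    ∃ w, S.mem w ∧ ∀ c, P.app w c = (P.app g c).bind (P.app f) := by
  obtain ⟨kf, hkf, hkfm, hkfb⟩ := kApp P S f
  obtain ⟨w, hwm, hw⟩ := sApp P S kf g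
  refine ⟨w, hwm (S.closed _ _ _ S.k'_mem hf hkf) hg, fun c => ?_⟩
  rw [hw c, hkfb c, papp_some_left]

lemma identApp (P : PCA) (S : SubPCA P) :
    ∃ i, S.mem i ∧ ∀ c, P.app i c = Part.some c := by
  obtain ⟨w, hwm, hw⟩ := sApp P S S.k' S.k'
  refine ⟨w, hwm S.k'_mem S.k'_mem, fun c => ?_⟩
  obtain ⟨kc, hkc, _, hkcb⟩ := kApp P S c
  rw [hw c, hkc, papp_some_some, hkcb]

/-- `t·a = ⟨r·a, a⟩` whenever `r·a` is defined. -/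
lemma pairWith (P : PCA) (S : SubPCA P) (Q : Pairing P S) (r : P.A) (hr : S.mem r) :
    ∃ t, S.mem t ∧ ∀ a x, P.app r a = Part.some x →
      P.app t a = Part.some (Q.code x a) := by
  obtain ⟨pr, hprm, hpr⟩ := compApp P S Q.pair r Q.pair_mem hr
  obtain ⟨i, him, hi⟩ := identApp P S
  obtain ⟨t, htm, ht⟩ := sApp P S pr i
  refine ⟨t, htm hprm him, fun a x hx => ?_⟩
  rw [ht a, hpr a, hx, Part.bind_some, hi a, papp_some_right]
  have := Q.code_spec x a
  rwa [papp_some_right] at this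

lemma eWLe_refl (P : PCA) (S : SubPCA P) (Q : Pairing P S) {X : Type} (φ : X → P.A)
    (g : X × P.A → Set (Set P.A)) : eWLe P S Q φ g g := by
  refine ⟨Q.p2, Q.p2, Q.p2_mem, Q.p2_mem, fun x a h => ⟨a, Q.p2_spec _ _, h, ?_⟩⟩
  exact fun A0 hA0 => ⟨A0, hA0, fun q hq => ⟨q, hq, Q.p2_spec _ _⟩⟩

end IsoAux

/-- The extended Weihrauch doctrine and the instance reducibility doctrine are
naturally isomorphic: the comparison map is an order embedding, its inverse is
`ewToIR` (an isomorphism up to equivalence in the fibre preorder), and the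
square with the reindexings commutes up to equivalence, naturally in `(X,φ)`. -/


theorem iR_iso_eW (P : PCA) (S : SubPCA P) (Q : Pairing P S) :
    (∀ (X : Type) (φ : X → P.A) (u v : IRObj P S X φ),
        IRle P S Q u v ↔ eWLe P S Q φ (irToEW P S u) (irToEW P S v)) ∧
    (∀ (X : Type) (φ : X → P.A) (g : X × P.A → Set (Set P.A)),
        eWLe P S Q φ (irToEW P S (ewToIR P S Q φ g)) g ∧
        eWLe P S Q φ g (irToEW P S (ewToIR P S Q φ g))) ∧
    (∀ (Y : Type) (ψ : Y → P.A) (X : Type) (φ : X → P.A)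
        (F : PAMor P S Y ψ X φ) (u : IRObj P S X φ),
        eWLe P S Q ψ (irToEW P S (irReindex P S Q F u)) (eWmap P S Q F (irToEW P S u)) ∧
        eWLe P S Q ψ (eWmap P S Q F (irToEW P S u)) (irToEW P S (irReindex P S Q F u))) := by
  classical
  obtain ⟨i, him, hi⟩ := IsoAux.identApp P S
  refine ⟨?_, ?_, ?_⟩
  · -- fibrewise order iso
    intro X φ u v
    constructor
    · rintro ⟨h, ⟨r, hrS, hr⟩, hcomm, l, hlS, hl⟩
      obtain ⟨l1, hl1S, hl1⟩ := IsoAux.compApp P S r Q.p2 hrS Q.p2_mem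
      refine ⟨l1, l, hl1S, hlS, fun x a hne => ?_⟩
      obtain ⟨A0, y, hyf', hyψ', hyα⟩ := Set.nonempty_iff_ne_empty.mpr hne
      have hyf : u.f y = x := hyf'
      have hyψ : u.ψ y = a := hyψ'
      refine ⟨v.ψ (h y), ?_, ?_, ?_⟩
      · rw [hl1, Q.p2_spec, Part.bind_some, ← hyψ, hr y]
      · refine Set.nonempty_iff_ne_empty.mp ⟨v.α (h y), h y, ?_, rfl, rfl⟩
        rw [hcomm y, hyf]
      · rintro A0' ⟨y₂, hy₂f', hy₂ψ', hy₂α'⟩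
        have hy₂f : u.f y₂ = x := hy₂f'
        have hy₂ψ : u.ψ y₂ = a := hy₂ψ'
        have hy₂α : u.α y₂ = A0' := hy₂α'
        have hψeq : v.ψ (h y₂) = v.ψ (h y) := by
          have h1 := hr y₂; have h2 := hr y
          rw [hy₂ψ] at h1; rw [hyψ] at h2
          exact Part.some_inj.mp (h1.symm.trans h2)
        refine ⟨v.α (h y₂), ⟨h y₂, by rw [hcomm y₂, hy₂f], hψeq, rfl⟩, fun q hq => ?_⟩
        obtain ⟨c, hc, hlc⟩ := hl y₂ q hq
        exact ⟨c, hy₂α ▸ hc, by rwa [hy₂ψ] at hlc⟩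
    · rintro ⟨l1, l2, hl1S, hl2S, H⟩
      have H' : ∀ y : u.Y, ∃ y' : v.Y, v.f y' = u.f y ∧
          P.app l1 (Q.code (φ (u.f y)) (u.ψ y)) = Part.some (v.ψ y') ∧
          ∀ q ∈ v.α y', ∃ c ∈ u.α y, P.app l2 (Q.code (u.ψ y) q) = Part.some c := by
        intro y
        have hne : irToEW P S u (u.f y, u.ψ y) ≠ ∅ :=
          Set.nonempty_iff_ne_empty.mp ⟨u.α y, y, rfl, rfl, rfl⟩
        obtain ⟨r, hr1, _, hr3⟩ := H (u.f y) (u.ψ y) hne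
        obtain ⟨B, ⟨y', hy'f, hy'ψ, hy'α⟩, hB⟩ := hr3 (u.α y) ⟨y, rfl, rfl, rfl⟩
        exact ⟨y', hy'f, by rw [hy'ψ]; exact hr1, by rw [hy'α]; exact hB⟩
      choose h hhf hhψ hhα using H'
      obtain ⟨ru, hruS, hru⟩ := u.hf
      obtain ⟨t, htS, ht⟩ := IsoAux.pairWith P S Q ru hruS
      obtain ⟨rψ, hrψS, hrψ⟩ := IsoAux.compApp P S l1 t hl1S htS
      refine ⟨h, ⟨rψ, hrψS, fun y => ?_⟩, hhf, l2, hl2S, hhα⟩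
      rw [hrψ, ht (u.ψ y) (φ (u.f y)) (hru y), Part.bind_some, hhψ y]
  · -- essential surjectivity
    intro X φ g
    constructor
    · obtain ⟨l1, hl1S, hl1⟩ := IsoAux.compApp P S Q.p2 Q.p2 Q.p2_mem Q.p2_mem
      refine ⟨l1, Q.p2, hl1S, Q.p2_mem, fun x b hne => ?_⟩
      obtain ⟨A0, ⟨x', a, A0', hA0'⟩, hyf', hyψ', hyα'⟩ := Set.nonempty_iff_ne_empty.mpr hne
      have hx : x' = x := hyf'
      subst hx
      have hb : Q.code (φ x') a = b := hyψ'
      refine ⟨a, ?_, ?_, ?_⟩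
      · rw [hl1, Q.p2_spec, Part.bind_some, ← hb, Q.p2_spec]
      · exact Set.nonempty_iff_ne_empty.mp ⟨A0', hA0'⟩
      · rintro A1 ⟨⟨x₂, a₂, A₂, hA₂⟩, hy₂f', hy₂ψ', hy₂α'⟩
        have hx₂ : x₂ = x' := hy₂f'
        subst hx₂
        have hb₂ : Q.code (φ x₂) a₂ = b := hy₂ψ'
        have hA₂' : A₂ = A1 := hy₂α'
        have ha : a₂ = a := by
          have h1 := Q.p2_spec (φ x₂) a₂
          have h2 := Q.p2_spec (φ x₂) a
          rw [hb₂] at h1; rw [hb] at h2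
          exact Part.some_inj.mp (h1.symm.trans h2)
        subst ha
        exact ⟨A1, hA₂' ▸ hA₂, fun q hq => ⟨q, hq, Q.p2_spec _ _⟩⟩
    · refine ⟨i, Q.p2, him, Q.p2_mem, fun x a hne => ?_⟩
      obtain ⟨A0, hA0⟩ := Set.nonempty_iff_ne_empty.mpr hne
      refine ⟨Q.code (φ x) a, hi _, ?_, fun A1 hA1 => ?_⟩
      · exact Set.nonempty_iff_ne_empty.mp ⟨A0, ⟨x, a, A0, hA0⟩, rfl, rfl, rfl⟩
      · exact ⟨A1, ⟨⟨x, a, A1, hA1⟩, rfl, rfl, rfl⟩, fun q hq => ⟨q, hq, Q.p2_spec _ _⟩⟩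
  · -- naturality
    intro Y ψ X φ F u
    have heq : irToEW P S (irReindex P S Q F u) = eWmap P S Q F (irToEW P S u) := by
      funext p
      ext A0
      constructor
      · rintro ⟨⟨⟨y', yu⟩, hp⟩, h1, h2, h3⟩
        dsimp [irReindex] at h1 h2 h3 hp
        subst h1
        exact ⟨u.ψ yu, h2.symm, yu, hp.symm, rfl, h3⟩
      · rintro ⟨a', hb, yu, hfu, hψu, hα⟩
        have hfu' : u.f yu = F.toFun p.1 := hfu
        have hψu' : u.ψ yu = a' := hψu
        refine ⟨⟨(p.1, yu), hfu'.symm⟩, rfl, ?_, hα⟩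
        show Q.code (ψ p.1) (u.ψ yu) = p.2
        rw [hψu', hb]
    rw [heq]
    exact ⟨IsoAux.eWLe_refl P S Q ψ _, IsoAux.eWLe_refl P S Q ψ _⟩
end
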